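/- arXiv:math/0011009 — 7 statements merged into one kernel-verified Lean document; each statement's English description precedes it below -/
import Mathlib

section
/- Let B be a C*-algebra and x an element of B such that x commutes with both x·x* and x*·x. Then x is normal, i.e., x·x* = x*·x. -/
/-- If an element `x` of a C*-algebra commutes with both `x * x*` and `x* * x`,
then `x` is normal: `x * x* = x* * x`. -/
theorem normal_of_commutes_with_xxstar_and_xstarx
    {B : Type*} [CStarAlgebra B] (x : B)
    (h1 : x * (x * star x) = (x * star x) * x)
    (h2 : x * (star x * x) = (star x * x) * x) :
    x * star x = star x * x := by
  set s := star x with hs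
  -- right-associated forms of the hypotheses and their adjoints
  have e1 : x * (x * s) = x * (s * x) := by
    simpa [mul_assoc] using h1
  have e4 : s * (x * s) = s * (s * x) := by
    have := congrArg star h2
    simpa [star_mul, mul_assoc, hs] using this
  -- the self-adjoint element d = x s - s x squares to zero
  have key : (x * s - s * x) * (x * s - s * x) = 0 := by
    simp only [mul_sub, sub_mul, mul_assoc]
    rw [e1, e4]
    abel
  -- d is self-adjoint
  have hsa : star (x * s - s * x) = x * s - s * x := by
    simp [star_sub, star_mul, hs]
  have hd : (x * s - s * x) = 0 := by
    have : star (x * s - s * x) * (x * s - s * x) = 0 := by rw [hsa]; exact key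
    exact CStarRing.star_mul_self_eq_zero_iff _ |>.mp this
  have := sub_eq_zero.mp hd
  simpa [hs] using this
end

section
/- Let (B, 𝕋, ω) be a C*-dynamical system and A ⊆ B a maximal element of the class of abelian 𝕋-invariant *-subalgebras. Then for any self-adjoint b ∈ A′ ∩ B, the averaged element π₀(b) = ∫_𝕋 ω_t(b) dt belongs to A. -/
open MeasureTheory intervalIntegral Function

/-- If `A` is maximal among abelian `𝕋`-invariant *-subalgebras of a
C*-dynamical system `(B, 𝕋, ω)`, then for every self-adjoint element `b` of the
relative commutant `A' ∩ B`, the average `π₀(b) = ∫_𝕋 ω_t(b) dt` lies in `A`. -/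
theorem average_of_selfAdjoint_commutant_mem
    {B : Type*} [CStarAlgebra B]
    (ω : Circle → B ≃⋆ₐ[ℂ] B)
    (hω : ∀ s t : Circle, ∀ b : B, ω (s * t) b = ω s (ω t b))
    (hωcont : ∀ b : B, Continuous fun t : Circle => ω t b)
    (A : StarSubalgebra ℂ B)
    (hab : ∀ a ∈ A, ∀ a' ∈ A, a * a' = a' * a)
    (hA : ∀ t : Circle, ∀ a ∈ A, ω t a ∈ A)
    (hmax : ∀ A' : StarSubalgebra ℂ B,
      (∀ a ∈ A', ∀ a' ∈ A', a * a' = a' * a) →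
      (∀ t : Circle, ∀ a ∈ A', ω t a ∈ A') → A ≤ A' → A' = A)
    (b : B) (hsa : star b = b) (hb : ∀ a ∈ A, a * b = b * a) :
    ((2 * Real.pi)⁻¹ • ∫ θ in (0:ℝ)..(2 * Real.pi), ω (Circle.exp θ) b) ∈ A := by
  have hω1 : ∀ x : B, ω 1 x = x := fun x => by
    have h := hω 1 1 x
    rw [one_mul] at h
    exact ((ω 1).injective h).symm
  set f : ℝ → B := fun θ => ω (Circle.exp θ) b with hfdef
  have hfc : Continuous f := (hωcont b).comp Circle.exp.continuous
  have hfi : ∀ u v : ℝ, IntervalIntegrable f volume u v := fun u v =>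
    hfc.intervalIntegrable u v
  set p : B := (2 * Real.pi)⁻¹ • ∫ θ in (0:ℝ)..(2 * Real.pi), f θ with hpdef
  -- each ω t b commutes with A
  have hcomm : ∀ a ∈ A, ∀ t : Circle, a * ω t b = ω t b * a := by
    intro a ha t
    have ha' : ω t⁻¹ a ∈ A := hA t⁻¹ a ha
    have hta : ω t (ω t⁻¹ a) = a := by rw [← hω t t⁻¹ a, mul_inv_cancel, hω1]
    calc a * ω t b = ω t (ω t⁻¹ a) * ω t b := by rw [hta]
      _ = ω t (ω t⁻¹ a * b) := (map_mul _ _ _).symm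
      _ = ω t (b * ω t⁻¹ a) := by rw [hb _ ha']
      _ = ω t b * ω t (ω t⁻¹ a) := map_mul _ _ _
      _ = ω t b * a := by rw [hta]
  -- p commutes with A
  have haI : ∀ a ∈ A, a * p = p * a := by
    intro a ha
    have h1 : a * (∫ θ in (0:ℝ)..(2 * Real.pi), f θ)
        = ∫ θ in (0:ℝ)..(2 * Real.pi), a * f θ :=
      ((ContinuousLinearMap.mul ℂ B a).intervalIntegral_comp_comm (hfi _ _)).symm
    have h2 : (∫ θ in (0:ℝ)..(2 * Real.pi), f θ) * a
        = ∫ θ in (0:ℝ)..(2 * Real.pi), f θ * a :=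
      (((ContinuousLinearMap.mul ℂ B).flip a).intervalIntegral_comp_comm (hfi _ _)).symm
    have h3 : (∫ θ in (0:ℝ)..(2 * Real.pi), a * f θ)
        = ∫ θ in (0:ℝ)..(2 * Real.pi), f θ * a := by
      congr 1; funext θ; exact hcomm a ha _
    rw [hpdef, mul_smul_comm, smul_mul_assoc, h1, h2, h3]
  -- p is self-adjoint
  have hpsa : star p = p := by
    have h1 : star (∫ θ in (0:ℝ)..(2 * Real.pi), f θ)
        = ∫ θ in (0:ℝ)..(2 * Real.pi), star (f θ) :=
      (((starL' ℝ : B ≃L[ℝ] B) : B →L[ℝ] B).intervalIntegral_comp_comm (hfi _ _)).symm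
    have h2 : (∫ θ in (0:ℝ)..(2 * Real.pi), star (f θ))
        = ∫ θ in (0:ℝ)..(2 * Real.pi), f θ := by
      congr 1; funext θ
      rw [hfdef]; exact (map_star (ω (Circle.exp θ)) b).symm.trans (by rw [hsa])
    calc star p = (starL' ℝ : B ≃L[ℝ] B) ((2 * Real.pi)⁻¹ •
          ∫ θ in (0:ℝ)..(2 * Real.pi), f θ) := rfl
      _ = (2 * Real.pi)⁻¹ • (starL' ℝ : B ≃L[ℝ] B)
          (∫ θ in (0:ℝ)..(2 * Real.pi), f θ) := map_smul _ _ _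
      _ = p := by rw [hpdef]; congr 1; exact h1.trans h2
  -- f is periodic
  have hfper : Periodic f (2 * Real.pi) := fun x => by
    simp only [hfdef]; rw [Circle.exp_add_two_pi]
  -- p is invariant
  have hinvp : ∀ s : Circle, ω s p = p := by
    intro s
    obtain ⟨α, rfl⟩ : ∃ α, Circle.exp α = s := ⟨_, Circle.exp_arg s⟩
    have hLc : Continuous (ω (Circle.exp α)) :=
      (StarAlgEquiv.isometry (ω (Circle.exp α))).continuous
    let L : B →L[ℂ] B :=
      ⟨{ toFun := ω (Circle.exp α), map_add' := map_add _, map_smul' := map_smul _ }, hLc⟩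
    have h1 : ω (Circle.exp α) (∫ θ in (0:ℝ)..(2 * Real.pi), f θ)
        = ∫ θ in (0:ℝ)..(2 * Real.pi), ω (Circle.exp α) (f θ) :=
      (L.intervalIntegral_comp_comm (hfi _ _)).symm
    have h2 : (∫ θ in (0:ℝ)..(2 * Real.pi), ω (Circle.exp α) (f θ))
        = ∫ θ in (0:ℝ)..(2 * Real.pi), f (α + θ) := by
      congr 1; funext θ
      rw [hfdef]
      simp only
      rw [← hω, ← Circle.exp_add]
    have h3 : (∫ θ in (0:ℝ)..(2 * Real.pi), f (α + θ))
        = ∫ θ in α..(α + 2 * Real.pi), f θ := by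
      simpa using intervalIntegral.integral_comp_add_left f α (a := 0) (b := 2 * Real.pi)
    have h4 : (∫ θ in α..(α + 2 * Real.pi), f θ)
        = ∫ θ in (0:ℝ)..(2 * Real.pi), f θ := by
      simpa using hfper.intervalIntegral_add_eq α 0
    have hsm : ω (Circle.exp α) p = (2 * Real.pi)⁻¹ •
        ω (Circle.exp α) (∫ θ in (0:ℝ)..(2 * Real.pi), f θ) := by
      rw [hpdef]
      exact L.toLinearMap.map_smul_of_tower _ _
    rw [hsm, h1, h2, h3, h4, hpdef]
  -- the star subalgebra generated by A and p
  set S : Set B := ↑A ∪ {p} with hSdef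
  have hS_star : ∀ x ∈ S, star x ∈ S := by
    rintro x (hx | hx)
    · exact Or.inl (star_mem hx)
    · rw [Set.mem_singleton_iff] at hx; subst hx; exact Or.inr (by simp [hpsa])
  have hS_comm : ∀ x ∈ S, ∀ y ∈ S, x * y = y * x := by
    rintro x (hx | hx) y (hy | hy)
    · exact hab x hx y hy
    · rw [Set.mem_singleton_iff] at hy; subst hy; exact haI x hx
    · rw [Set.mem_singleton_iff] at hx; subst hx; exact (haI y hy).symm
    · rw [Set.mem_singleton_iff] at hx hy; subst hx; subst hy; rfl
  have hS_sub : S ⊆ (StarSubalgebra.centralizer ℂ S : Set B) := by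
    intro x hx
    rw [SetLike.mem_coe, StarSubalgebra.mem_centralizer_iff]
    intro g hg
    exact ⟨hS_comm g hg x hx, hS_comm _ (hS_star g hg) x hx⟩
  have hadj1 : StarAlgebra.adjoin ℂ S ≤ StarSubalgebra.centralizer ℂ S :=
    StarAlgebra.adjoin_le hS_sub
  have hadj2 : StarAlgebra.adjoin ℂ S ≤
      StarSubalgebra.centralizer ℂ (StarAlgebra.adjoin ℂ S : Set B) := by
    apply StarAlgebra.adjoin_le
    intro x hx
    rw [SetLike.mem_coe, StarSubalgebra.mem_centralizer_iff]
    intro g hg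
    have hg1 := ((StarSubalgebra.mem_centralizer_iff ℂ).mp (hadj1 hg)) x hx
    have hg2 := ((StarSubalgebra.mem_centralizer_iff ℂ).mp (hadj1 (star_mem hg))) x hx
    exact ⟨hg1.1.symm, hg2.1.symm⟩
  have habA' : ∀ x ∈ StarAlgebra.adjoin ℂ S, ∀ y ∈ StarAlgebra.adjoin ℂ S,
      x * y = y * x := by
    intro x hx y hy
    exact (((StarSubalgebra.mem_centralizer_iff ℂ).mp (hadj2 hy)) x hx).1
  have hinvA' : ∀ t : Circle, ∀ x ∈ StarAlgebra.adjoin ℂ S,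
      ω t x ∈ StarAlgebra.adjoin ℂ S := by
    intro t x hx
    induction hx using StarAlgebra.adjoin_induction with
    | mem x hx =>
      rcases hx with hx | hx
      · exact StarAlgebra.subset_adjoin ℂ S (Or.inl (hA t x hx))
      · rw [Set.mem_singleton_iff] at hx; subst hx
        rw [hinvp t]
        exact StarAlgebra.subset_adjoin ℂ S (Or.inr rfl)
    | algebraMap r =>
      have : ω t (algebraMap ℂ B r) = algebraMap ℂ B r := by
        rw [Algebra.algebraMap_eq_smul_one, _root_.map_smul, map_one]
      rw [this]; exact algebraMap_mem _ r
    | add x y hx hy ihx ihy => rw [map_add]; exact add_mem ihx ihy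
    | mul x y hx hy ihx ihy => rw [map_mul]; exact mul_mem ihx ihy
    | star x hx ihx => rw [map_star]; exact star_mem ihx
  have hle : A ≤ StarAlgebra.adjoin ℂ S := fun a ha =>
    StarAlgebra.subset_adjoin ℂ S (Or.inl ha)
  have := hmax (StarAlgebra.adjoin ℂ S) habA' hinvA' hle
  rw [← this]
  exact StarAlgebra.subset_adjoin ℂ S (Or.inr rfl)
end

section
/- Let (B, 𝕋, ω) be a C*-dynamical system with B ⊆ B(H), and let A be a maximal (abelian 𝕋-invariant *-subalgebra) of B. If every spectral component π_n(b) of every b ∈ A′ ∩ B lies in A, then A′ ∩ B ⊆ A″; in particular A′ ∩ B is abelian. -/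
/-!
For `c` in the commutant of `A`, the continuous linear map `L T = T c - c T` kills every
spectral component `π_n(b)`, because these lie in `A`. Since `L` commutes with taking Fourier
coefficients, the continuous function `t ↦ L (ω_t b)` on the circle has vanishing Fourier
coefficients, hence vanishes: testing against functionals reduces this to scalar functions, where
a continuous function with absolutely summable Fourier coefficients is the uniform sum of its
Fourier series. Evaluating at `t = 1` gives `b c = c b`.
-/

open MeasureTheory AddCircle

local instance : Fact (0 < 2 * Real.pi) := ⟨Real.two_pi_pos⟩

section FourierCoeff

variable {T : ℝ} [Fact (0 < T)] {E F : Type*} [NormedAddCommGroup E] [NormedSpace ℂ E]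
  [CompleteSpace E] [NormedAddCommGroup F] [NormedSpace ℂ F] [CompleteSpace F]

theorem fourierCoeff_continuousLinearMap_comp (L : E →L[ℂ] F) {f : AddCircle T → E}
    (hf : Integrable f haarAddCircle) (n : ℤ) :
    fourierCoeff (fun x => L (f x)) n = L (fourierCoeff f n) := by
  simp only [fourierCoeff, ← L.map_smul]
  exact L.integral_comp_comm (hf.fourier_smul (-n))

theorem ContinuousMap.eq_zero_of_fourierCoeff_eq_zero {f : C(AddCircle T, ℂ)}
    (hf : ∀ n, fourierCoeff f n = 0) : f = 0 := by
  have hsummable : Summable (fourierCoeff f) := by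
    rw [show fourierCoeff f = 0 from funext hf]
    exact summable_zero
  have hsum := hasSum_fourier_series_of_summable hsummable
  simp only [hf, zero_smul] at hsum
  exact hsum.unique hasSum_zero

theorem eq_zero_of_fourierCoeff_eq_zero {f : AddCircle T → E} (hf : Continuous f)
    (hcoeff : ∀ n, fourierCoeff f n = 0) : f = 0 := by
  funext x
  refine (SeparatingDual.eq_zero_of_forall_dual_eq_zero (R := ℂ)) fun φ => ?_
  have hφf : (⟨fun x => φ (f x), φ.continuous.comp hf⟩ : C(AddCircle T, ℂ)) = 0 :=
    ContinuousMap.eq_zero_of_fourierCoeff_eq_zero fun n => by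
      simp [fourierCoeff_continuousLinearMap_comp φ (hf.integrable_of_hasCompactSupport
        (HasCompactSupport.of_compactSpace f)), hcoeff]
  exact congr($hφf x)

end FourierCoeff

theorem fourierCoeff_comp_toCircle {E : Type*} [NormedAddCommGroup E] [NormedSpace ℂ E]
    (f : Circle → E) (n : ℤ) :
    fourierCoeff (fun x : AddCircle (2 * Real.pi) => f x.toCircle) n =
      (2 * Real.pi)⁻¹ • ∫ θ in (0:ℝ)..(2 * Real.pi),
        Complex.exp (-(n : ℂ) * θ * Complex.I) • f (Circle.exp θ) := by
  rw [fourierCoeff_eq_intervalIntegral _ n 0, zero_add, one_div]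
  congr 1
  refine intervalIntegral.integral_congr fun θ _ => ?_
  simp only [fourier_coe_apply, toCircle_apply_mk]
  congr 2
  · push_cast
    field_simp
  · field_simp

theorem commutant_subset_double_commutant_general
    {H : Type*} [NormedAddCommGroup H] [InnerProductSpace ℂ H] [CompleteSpace H]
    (B : StarSubalgebra ℂ (H →L[ℂ] H))
    (ω : Circle → B ≃⋆ₐ[ℂ] B)
    (hω : ∀ s t : Circle, ∀ b : B, ω (s * t) b = ω s (ω t b))
    (hωcont : ∀ b : B, Continuous fun t : Circle => ((ω t b : B) : H →L[ℂ] H))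
    (A : StarSubalgebra ℂ (H →L[ℂ] H))
    (hspec : ∀ b : B, (∀ a ∈ A, a * (b : H →L[ℂ] H) = (b : H →L[ℂ] H) * a) →
      ∀ n : ℤ,
        ((2 * Real.pi)⁻¹ •
          ∫ θ in (0:ℝ)..(2 * Real.pi),
            Complex.exp (-(n : ℂ) * θ * Complex.I) •
              ((ω (Circle.exp θ) b : B) : H →L[ℂ] H)) ∈ A) :
    ∀ b : B, (∀ a ∈ A, a * (b : H →L[ℂ] H) = (b : H →L[ℂ] H) * a) →
      ∀ c : H →L[ℂ] H, (∀ a ∈ A, a * c = c * a) →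
        (b : H →L[ℂ] H) * c = c * (b : H →L[ℂ] H) := by
  intro b hb c hc
  let L : (H →L[ℂ] H) →L[ℂ] (H →L[ℂ] H) :=
    (ContinuousLinearMap.mul ℂ _).flip c - ContinuousLinearMap.mul ℂ _ c
  have hLA : ∀ a ∈ A, L a = 0 := fun a ha => by simp [L, hc a ha]
  let f : Circle → H →L[ℂ] H := fun t => ω t b
  have hf : Continuous (fun x : AddCircle (2 * Real.pi) => f x.toCircle) :=
    (hωcont b).comp continuous_toCircle
  have hLf : (fun x : AddCircle (2 * Real.pi) => L (f x.toCircle)) = 0 :=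
    eq_zero_of_fourierCoeff_eq_zero (L.continuous.comp hf) fun n => by
      rw [fourierCoeff_continuousLinearMap_comp L
          (hf.integrable_of_hasCompactSupport (.of_compactSpace _)), fourierCoeff_comp_toCircle]
      exact hLA _ (hspec b hb n)
  have hω1 : ω 1 b = b := by
    have h := hω 1 1 b
    rw [one_mul] at h
    exact (ω 1).injective h.symm
  simpa [f, L, hω1, sub_eq_zero] using congr_fun hLf 0

/-- Let `B ⊆ B(H)` be a C*-algebra of operators with circle action `ω`, and let
`A ≤ B` be a maximal (abelian `𝕋`-invariant *-subalgebra) of `B`. If every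
spectral component `π_n(b)` of every `b ∈ A' ∩ B` lies in `A`, then
`A' ∩ B ⊆ A''`; in particular `A' ∩ B` is abelian. -/
theorem commutant_subset_double_commutant
    {H : Type*} [NormedAddCommGroup H] [InnerProductSpace ℂ H] [CompleteSpace H]
    (B : StarSubalgebra ℂ (H →L[ℂ] H))
    (hBclosed : IsClosed (B : Set (H →L[ℂ] H)))
    (ω : Circle → B ≃⋆ₐ[ℂ] B)
    (hω : ∀ s t : Circle, ∀ b : B, ω (s * t) b = ω s (ω t b))
    (hωcont : ∀ b : B, Continuous fun t : Circle => ((ω t b : B) : H →L[ℂ] H))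
    (A : StarSubalgebra ℂ (H →L[ℂ] H)) (hAB : A ≤ B)
    (hab : ∀ a ∈ A, ∀ a' ∈ A, a * a' = a' * a)
    (hA : ∀ t : Circle, ∀ b : B, (b : H →L[ℂ] H) ∈ A → ((ω t b : B) : H →L[ℂ] H) ∈ A)
    (hmax : ∀ A' : StarSubalgebra ℂ (H →L[ℂ] H), A' ≤ B →
      (∀ a ∈ A', ∀ a' ∈ A', a * a' = a' * a) →
      (∀ t : Circle, ∀ b : B, (b : H →L[ℂ] H) ∈ A' → ((ω t b : B) : H →L[ℂ] H) ∈ A') →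
      A ≤ A' → A' = A)
    (hspec : ∀ b : B, (∀ a ∈ A, a * (b : H →L[ℂ] H) = (b : H →L[ℂ] H) * a) →
      ∀ n : ℤ,
        ((2 * Real.pi)⁻¹ •
          ∫ θ in (0:ℝ)..(2 * Real.pi),
            Complex.exp (-(n : ℂ) * θ * Complex.I) •
              ((ω (Circle.exp θ) b : B) : H →L[ℂ] H)) ∈ A) :
    ∀ b : B, (∀ a ∈ A, a * (b : H →L[ℂ] H) = (b : H →L[ℂ] H) * a) →
      ∀ c : H →L[ℂ] H, (∀ a ∈ A, a * c = c * a) →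
        (b : H →L[ℂ] H) * c = c * (b : H →L[ℂ] H) :=
  commutant_subset_double_commutant_general B ω hω hωcont A hspec
end

section
/- Let (B, 𝕋, ω) be a C*-dynamical system and suppose A is maximal among abelian 𝕋-invariant *-subalgebras of B. Then A is a maximal abelian subalgebra of B, i.e., A′ ∩ B = A. -/
/-!
Let `b` commute with `A`. Since `A` is `ω`-invariant, so is its commutant, hence the Fourier
coefficients `bₙ = ∫ t⁻ⁿ • ω t b dt` of the orbit of `b` lie in the commutant; they are
semi-invariant: `ω s bₙ = sⁿ • bₙ`.

A normal semi-invariant element `x` of the commutant lies in `A`, because `A ∪ {x}` generates an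
abelian invariant *-subalgebra. For a semi-invariant `x` of the commutant this applies to `x x*`
and `x* x`, so `x` commutes with `[x, x*] ∈ A`. By Kleinecke–Shirokov `[x, x*]` is then
quasinilpotent, and being self-adjoint it vanishes: `x` is normal, hence `x ∈ A`.

Finally `A` is closed (its closure is again abelian and invariant), and `b` is a limit of
linear combinations of its Fourier coefficients (an approximate identity, followed by the density
of trigonometric polynomials in `C(𝕋)`), so `b ∈ A`.
-/

open MeasureTheory Filter Set Submodule

section KleineckeShirokov

open scoped Nat

variable {R : Type*} [Ring R]

def innerDerivation (x : R) : AddMonoid.End R :=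
  AddMonoidHom.mulLeft x - AddMonoidHom.mulRight x

@[simp] theorem innerDerivation_apply (x z : R) : innerDerivation x z = x * z - z * x := rfl

theorem innerDerivation_mul (x y z : R) :
    innerDerivation x (y * z) = innerDerivation x y * z + y * innerDerivation x z := by
  simp only [innerDerivation_apply]; noncomm_ring

theorem innerDerivation_pow_succ_apply (x z : R) (n : ℕ) :
    (innerDerivation x ^ (n + 1)) z = innerDerivation x ((innerDerivation x ^ n) z) := by
  rw [pow_succ']; rfl

theorem innerDerivation_pow_succ_apply' (x z : R) (n : ℕ) :
    (innerDerivation x ^ (n + 1)) z = (innerDerivation x ^ n) (innerDerivation x z) := by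
  rw [pow_succ]; rfl

theorem innerDerivation_pow_mul_of_commute {x d : R} (h : Commute x d) (n : ℕ) (z : R) :
    (innerDerivation x ^ n) (d * z) = d * (innerDerivation x ^ n) z := by
  induction n with
  | zero => rfl
  | succ n ih =>
    rw [innerDerivation_pow_succ_apply, ih, innerDerivation_mul, innerDerivation_apply, h.eq,
      sub_self, zero_mul, zero_add, innerDerivation_pow_succ_apply]

theorem innerDerivation_pow_succ_mul {x y : R} (h : Commute x (innerDerivation x y)) (n : ℕ)
    (w : R) : (innerDerivation x ^ (n + 1)) (y * w) =
      y * (innerDerivation x ^ (n + 1)) w +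
        (n + 1) • (innerDerivation x y * (innerDerivation x ^ n) w) := by
  set δ := innerDerivation x
  induction n generalizing w with
  | zero =>
    simp only [zero_add, pow_one, pow_zero, one_smul]
    rw [innerDerivation_mul, add_comm]
    rfl
  | succ n ih =>
    calc (δ ^ (n + 2)) (y * w) = (δ ^ (n + 1)) (δ y * w) + (δ ^ (n + 1)) (y * δ w) := by
          rw [innerDerivation_pow_succ_apply', innerDerivation_mul, map_add]
      _ = δ y * (δ ^ (n + 1)) w +
            (y * (δ ^ (n + 2)) w + (n + 1) • (δ y * (δ ^ (n + 1)) w)) := by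
          rw [innerDerivation_pow_mul_of_commute h, ih, ← innerDerivation_pow_succ_apply',
            ← innerDerivation_pow_succ_apply']
      _ = y * (δ ^ (n + 2)) w + (n + 2) • (δ y * (δ ^ (n + 1)) w) := by
          rw [succ_nsmul _ (n + 1)]; abel

theorem innerDerivation_pow_pow {x y : R} (h : Commute x (innerDerivation x y)) (n : ℕ) :
    (innerDerivation x ^ n) (y ^ n) = n ! • innerDerivation x y ^ n := by
  induction n with
  | zero => simp
  | succ n ih =>
    rw [pow_succ' y, innerDerivation_pow_succ_mul h, innerDerivation_pow_succ_apply, ih,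
      map_nsmul, innerDerivation_apply x (_ ^ n), (h.pow_right n).eq, sub_self, smul_zero,
      mul_zero, zero_add, mul_smul_comm, smul_smul, ← pow_succ', Nat.factorial_succ]

theorem norm_innerDerivation_le {R : Type*} [NormedRing R] (x z : R) :
    ‖innerDerivation x z‖ ≤ 2 * ‖x‖ * ‖z‖ :=
  calc ‖x * z - z * x‖ ≤ ‖x‖ * ‖z‖ + ‖z‖ * ‖x‖ :=
        (norm_sub_le _ _).trans (add_le_add (norm_mul_le _ _) (norm_mul_le _ _))
    _ = 2 * ‖x‖ * ‖z‖ := by ring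

theorem norm_innerDerivation_pow_le {R : Type*} [NormedRing R] (x z : R) (n : ℕ) :
    ‖(innerDerivation x ^ n) z‖ ≤ (2 * ‖x‖) ^ n * ‖z‖ := by
  induction n with
  | zero => simp
  | succ n ih =>
    rw [innerDerivation_pow_succ_apply, pow_succ', mul_assoc]
    exact (norm_innerDerivation_le _ _).trans (by gcongr)

theorem factorial_mul_norm_innerDerivation_pow_le {R : Type*} [NormedRing R] [NormedSpace ℝ R]
    {x y : R} (h : Commute x (innerDerivation x y)) {n : ℕ} (hn : 0 < n) :
    n ! * ‖innerDerivation x y ^ n‖ ≤ (2 * ‖x‖ * ‖y‖) ^ n := by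
  have h_le := norm_innerDerivation_pow_le x (y ^ n) n
  rw [innerDerivation_pow_pow h, RCLike.norm_nsmul ℝ, nsmul_eq_mul] at h_le
  calc _ ≤ (2 * ‖x‖) ^ n * ‖y ^ n‖ := h_le
    _ ≤ (2 * ‖x‖) ^ n * ‖y‖ ^ n := by gcongr; exact norm_pow_le' y hn
    _ = (2 * ‖x‖ * ‖y‖) ^ n := by ring

theorem eq_zero_of_frequently_factorial_mul_pow_le {a C : ℝ} (ha : 0 ≤ a)
    (h : ∃ᶠ n in atTop, n ! * a ^ n ≤ C ^ n) : a = 0 := by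
  by_contra ha0
  have ha : 0 < a := ha.lt_of_ne' ha0
  obtain ⟨n, hn, hlt⟩ := (h.and_eventually ((FloorSemiring.tendsto_pow_div_factorial_atTop
    (C / a)).eventually (gt_mem_nhds one_pos))).exists
  rw [div_pow, div_div, div_lt_one (by positivity)] at hlt
  linarith

theorem IsStarNormal.of_commute_innerDerivation_star {E : Type*} [NormedRing E] [StarRing E]
    [CStarRing E] [NormedSpace ℝ E] {x : E} (h : Commute x (innerDerivation x (star x))) :
    IsStarNormal x := by
  have hsa : IsSelfAdjoint (innerDerivation x (star x)) := by
    simp [IsSelfAdjoint, star_sub, star_mul]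
  have hnorm : ‖innerDerivation x (star x)‖ = 0 := by
    refine eq_zero_of_frequently_factorial_mul_pow_le (C := 2 * ‖x‖ * ‖star x‖)
      (norm_nonneg _) ((tendsto_pow_atTop_atTop_of_one_lt one_lt_two).frequently
        (Frequently.of_forall fun k => ?_))
    rw [← hsa.norm_pow_two_pow]
    exact factorial_mul_norm_innerDerivation_pow_le h (by positivity)
  rw [norm_eq_zero, innerDerivation_apply, sub_eq_zero] at hnorm
  exact ⟨hnorm.symm⟩

end KleineckeShirokov

section IntegralSMul

variable {X E : Type*} [TopologicalSpace X] [CompactSpace X] [MeasurableSpace X]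
  [OpensMeasurableSpace X] [NormedAddCommGroup E] [NormedSpace ℂ E]
  (μ : Measure X) [IsFiniteMeasure μ]

theorem ContinuousMap.integrable {F : Type*} [NormedAddCommGroup F] (g : C(X, F)) :
    Integrable g μ :=
  g.continuous.integrable_of_hasCompactSupport (HasCompactSupport.of_compactSpace _)

theorem ContinuousMap.integrable_smul (φ : C(X, ℂ)) (f : C(X, E)) :
    Integrable (fun x => φ x • f x) μ :=
  (φ • f).integrable μ

noncomputable def integralSMulCLM (f : C(X, E)) : C(X, ℂ) →L[ℂ] E :=
  LinearMap.mkContinuous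
    { toFun := fun φ => ∫ x, φ x • f x ∂μ
      map_add' := fun φ ψ => by
        simp only [ContinuousMap.add_apply, add_smul]
        exact integral_add (φ.integrable_smul μ f) (ψ.integrable_smul μ f)
      map_smul' := fun c φ => by
        simp only [ContinuousMap.smul_apply, smul_eq_mul, mul_smul]
        exact integral_smul c _ }
    (‖f‖ * μ.real univ) fun φ => by
      refine (norm_integral_le_of_norm_le_const (Eventually.of_forall fun x => ?_)).trans_eq
        (mul_right_comm _ _ _)
      rw [norm_smul, mul_comm]
      exact mul_le_mul (f.norm_coe_le_norm x) (φ.norm_coe_le_norm x) (norm_nonneg _)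
        (norm_nonneg _)

theorem integralSMulCLM_apply (f : C(X, E)) (φ : C(X, ℂ)) :
    integralSMulCLM μ f φ = ∫ x, φ x • f x ∂μ := rfl

end IntegralSMul

section ApproximateIdentity

variable {X : Type*} [MetricSpace X] [CompactSpace X] [MeasurableSpace X]
  [OpensMeasurableSpace X] (μ : Measure X) [IsFiniteMeasure μ] [μ.IsOpenPosMeasure]

theorem exists_nonneg_integral_eq_one_support_subset_ball (x₀ : X) {δ : ℝ} (hδ : 0 < δ) :
    ∃ ψ : C(X, ℝ), (∀ x, 0 ≤ ψ x) ∧ ∫ x, ψ x ∂μ = 1 ∧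
      Function.support ψ ⊆ Metric.ball x₀ δ := by
  let bump : C(X, ℝ) := ⟨fun x => max (δ - dist x x₀) 0, by fun_prop⟩
  have hbump_nonneg : ∀ x, 0 ≤ bump x := fun x => le_max_right _ _
  have hI : 0 < ∫ x, bump x ∂μ :=
    bump.continuous.integral_pos_of_hasCompactSupport_nonneg_nonzero
      (HasCompactSupport.of_compactSpace _) hbump_nonneg (x := x₀) (by simpa [bump] using hδ)
  refine ⟨⟨fun x => bump x / ∫ x, bump x ∂μ, by fun_prop⟩,
    fun x => div_nonneg (hbump_nonneg x) hI.le, ?_, fun x hx => ?_⟩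
  · simp only [ContinuousMap.coe_mk]
    rw [integral_div, div_self hI.ne']
  · by_contra h
    exact hx (by simp [bump, max_eq_right (by simpa using h : δ - dist x x₀ ≤ 0)])

theorem mem_closure_range_integralSMulCLM {E : Type*} [NormedAddCommGroup E] [NormedSpace ℂ E]
    [CompleteSpace E] (f : C(X, E)) (x₀ : X) :
    f x₀ ∈ closure (range (integralSMulCLM μ f)) := by
  refine Metric.mem_closure_iff.2 fun ε hε => ?_
  obtain ⟨δ, hδ, hfδ⟩ := Metric.continuous_iff.1 f.continuous x₀ (ε / 2) (half_pos hε)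
  obtain ⟨ψ, hψ_nonneg, hψ_integral, hψ_supp⟩ :=
    exists_nonneg_integral_eq_one_support_subset_ball μ x₀ hδ
  let φ : C(X, ℂ) := ⟨fun x => (ψ x : ℂ), by fun_prop⟩
  refine ⟨integralSMulCLM μ f φ, ⟨φ, rfl⟩, ?_⟩
  have hsub : f x₀ - integralSMulCLM μ f φ = ∫ x, φ x • (f x₀ - f x) ∂μ := by
    have hφ_integral : ∫ x, φ x ∂μ = 1 := by
      simp [φ, integral_complex_ofReal, hψ_integral]
    simp_rw [smul_sub]
    rw [integral_sub ((φ.integrable μ).smul_const _) (φ.integrable_smul μ f),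
      integral_smul_const, hφ_integral, one_smul, integralSMulCLM_apply]
  have hpt : ∀ x, ‖φ x • (f x₀ - f x)‖ ≤ ψ x * (ε / 2) := fun x => by
    rw [norm_smul, show ‖φ x‖ = ψ x from
      (Complex.norm_real _).trans (Real.norm_of_nonneg (hψ_nonneg x))]
    by_cases hx : ψ x = 0
    · simp [hx]
    · rw [← dist_eq_norm, dist_comm]
      exact mul_le_mul_of_nonneg_left (hfδ x (hψ_supp hx)).le (hψ_nonneg x)
  calc dist (f x₀) (integralSMulCLM μ f φ) ≤ ∫ x, ψ x * (ε / 2) ∂μ := by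
        rw [dist_eq_norm, hsub]
        exact norm_integral_le_of_norm_le ((ψ.integrable μ).mul_const _)
          (Eventually.of_forall hpt)
    _ = ε / 2 := by rw [integral_mul_const, hψ_integral, one_mul]
    _ < ε := half_lt_self hε

end ApproximateIdentity

theorem AddCircle.toCircle_surjective {T : ℝ} (hT : T ≠ 0) :
    Function.Surjective (toCircle : AddCircle T → Circle) := fun z =>
  ⟨(homeomorphCircle hT).symm z, by
    rw [← homeomorphCircle_apply hT, Homeomorph.apply_symm_apply]⟩

section FourierCoefficients

open AddCircle

variable {T : ℝ} [Fact (0 < T)] {E : Type*} [NormedAddCommGroup E] [NormedSpace ℂ E]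
  [CompleteSpace E]

theorem mem_closure_span_fourierCoeff (f : C(AddCircle T, E)) (x : AddCircle T) :
    f x ∈ closure (span ℂ (range (fourierCoeff f)) : Set E) := by
  let Φ := integralSMulCLM haarAddCircle f
  let trigPoly : Set C(AddCircle T, ℂ) := span ℂ (range (fourier (T := T)))
  have hΦ : Φ '' trigPoly ⊆ span ℂ (range (fourierCoeff f)) := by
    refine (image_span_subset (Φ : C(AddCircle T, ℂ) →ₗ[ℂ] E) _ _).2 ?_
    rintro _ ⟨n, rfl⟩
    exact subset_span ⟨-n, by simp [Φ, integralSMulCLM_apply, fourierCoeff]⟩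
  have hrange : range Φ ⊆ closure (Φ '' trigPoly) :=
    Φ.continuous.range_subset_closure_image_dense
      (dense_iff_topologicalClosure_eq_top.2 span_fourier_closure_eq_top)
  exact closure_minimal (hrange.trans (closure_mono hΦ)) isClosed_closure
    (mem_closure_range_integralSMulCLM _ f x)

theorem map_fourierCoeff_of_map_add {F : Type*} [FunLike F E E]
    [ContinuousLinearMapClass F ℂ E E] (U : AddCircle T → F)
    (hU : ∀ σ θ v, U (σ + θ) v = U σ (U θ v)) {v : E} (hv : Continuous fun θ => U θ v)
    (σ : AddCircle T) (n : ℤ) :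
    U σ (fourierCoeff (fun θ => U θ v) n) =
      fourier n σ • fourierCoeff (fun θ => U θ v) n := by
  let g : C(AddCircle T, E) := ⟨fun θ => U θ v, hv⟩
  have hshift : ∀ θ, fourier (-n) θ = fourier n σ * fourier (-n) (σ + θ) := fun θ => by
    rw [fourier_apply, fourier_apply, fourier_apply, ← Circle.coe_mul, ← toCircle_add]
    congr 2
    simp only [neg_smul, smul_add]; abel
  calc U σ (fourierCoeff (fun θ => U θ v) n)
      = ∫ θ, fourier (-n) θ • U (σ + θ) v ∂haarAddCircle := by
        let L : E →L[ℂ] E := ⟨U σ, map_continuous (U σ)⟩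
        change L (∫ θ, fourier (-n) θ • g θ ∂haarAddCircle) = _
        rw [← L.integral_comp_comm ((fourier (-n)).integrable_smul _ g)]
        congr 1 with θ
        exact (map_smul (U σ) _ _).trans (by rw [hU]; rfl)
    _ = ∫ θ, fourier n σ • (fourier (-n) (σ + θ) • U (σ + θ) v) ∂haarAddCircle := by
        simp_rw [smul_smul, ← hshift]
    _ = fourier n σ • fourierCoeff (fun θ => U θ v) n := by
        rw [integral_smul, integral_add_left_eq_self (fun θ => fourier (-n) θ • U θ v),
          fourierCoeff]

theorem fourierCoeff_mem_centralizer {B : Type*} [NormedRing B] [NormedAlgebra ℂ B]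
    [CompleteSpace B] {S : Set B} (f : C(AddCircle T, B)) (hf : ∀ θ, f θ ∈ S.centralizer)
    (n : ℤ) : fourierCoeff f n ∈ S.centralizer :=
  Convex.integral_mem ((Subalgebra.centralizer ℂ S).toSubmodule.restrictScalars ℝ).convex
    (isClosed_centralizer S) (ae_of_all _ fun θ => smul_mem_centralizer _ (hf θ))
    ((fourier (-n)).integrable_smul _ f)

end FourierCoefficients

open scoped CStarAlgebra

section MaximalInvariantAbelian

variable {G B : Type*} [CStarAlgebra B]

def IsAbelianInvariant (ω : G → B ≃⋆ₐ[ℂ] B) (A : StarSubalgebra ℂ B) : Prop :=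
  (∀ a ∈ A, ∀ a' ∈ A, a * a' = a' * a) ∧ ∀ t, ∀ a ∈ A, ω t a ∈ A

def IsSemiInvariant (ω : G → B ≃⋆ₐ[ℂ] B) (x : B) : Prop :=
  ∀ t, ∃ γ : ℂ, ω t x = γ • x

variable {ω : G → B ≃⋆ₐ[ℂ] B} {A : StarSubalgebra ℂ B}

theorem IsSemiInvariant.mul {x y : B} (hx : IsSemiInvariant ω x) (hy : IsSemiInvariant ω y) :
    IsSemiInvariant ω (x * y) := fun t => by
  obtain ⟨γ, hγ⟩ := hx t
  obtain ⟨δ, hδ⟩ := hy t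
  exact ⟨γ * δ, by rw [map_mul, hγ, hδ, smul_mul_smul_comm]⟩

theorem IsSemiInvariant.star {x : B} (hx : IsSemiInvariant ω x) :
    IsSemiInvariant ω (star x) := fun t => by
  obtain ⟨γ, hγ⟩ := hx t
  exact ⟨_, by rw [map_star, hγ, star_smul]⟩

theorem apply_one_of_map_mul [MulOneClass G] (hω : ∀ s t b, ω (s * t) b = ω s (ω t b))
    (b : B) : ω 1 b = b :=
  EquivLike.injective (ω 1) <| by rw [← hω, one_mul]

theorem apply_mem_centralizer_of_map_mul [Group G] (hω : ∀ s t b, ω (s * t) b = ω s (ω t b))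
    {S : Set B} (hS : ∀ t, ∀ a ∈ S, ω t a ∈ S) {x : B} (hx : x ∈ S.centralizer) (t : G) :
    ω t x ∈ S.centralizer := by
  intro a ha
  have hinv : ω t (ω t⁻¹ a) = a := by rw [← hω, mul_inv_cancel, apply_one_of_map_mul hω]
  rw [← hinv, ← map_mul, ← map_mul, hx _ (hS t⁻¹ a ha)]

theorem isClosed_of_maximal_isAbelianInvariant (hA : Maximal (IsAbelianInvariant ω) A) :
    IsClosed (A : Set B) := by
  have hcomm : closure (A : Set B) ⊆ centralizer (A : Set B) :=
    closure_minimal (fun a ha b hb => hA.1.1 b hb a ha) (isClosed_centralizer _)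
  have hcomm' : closure (A : Set B) ⊆ centralizer (closure (A : Set B)) :=
    closure_minimal (fun a ha b hb => (hcomm hb a ha).symm) (isClosed_centralizer _)
  have hinv : ∀ t, ∀ a ∈ A.topologicalClosure, ω t a ∈ A.topologicalClosure :=
    fun t a ha => map_mem_closure (map_continuous (ω t)) ha fun b hb => hA.1.2 t b hb
  rw [← hA.eq_of_ge ⟨fun a ha b hb => hcomm' hb a ha, hinv⟩ A.le_topologicalClosure]
  exact A.isClosed_topologicalClosure

theorem mem_of_mem_centralizer_of_isStarNormal (hA : Maximal (IsAbelianInvariant ω) A)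
    {x : B} (hxA : x ∈ centralizer (A : Set B)) (hx : IsStarNormal x)
    (hωx : IsSemiInvariant ω x) : x ∈ A := by
  have hcomm : ∀ a ∈ insert x (A : Set B), ∀ b ∈ insert x (A : Set B), a * b = b * a := by
    rintro a (rfl | ha) b (rfl | hb)
    exacts [rfl, (hxA b hb).symm, hxA a ha, hA.1.1 a ha b hb]
  have hcomm_star : ∀ a ∈ insert x (A : Set B), ∀ b ∈ insert x (A : Set B),
      a * star b = star b * a := by
    rintro a ha b (rfl | hb)
    · rcases ha with rfl | ha
      · exact hx.star_comm_self.symm.eq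
      · simpa using (congrArg star (hxA _ (star_mem ha))).symm
    · exact hcomm a ha _ (mem_insert_of_mem _ (star_mem hb))
  let A' := StarAlgebra.adjoin ℂ (insert x (A : Set B))
  have hA'comm : ∀ a ∈ A', ∀ b ∈ A', a * b = b * a := by
    have := StarAlgebra.isMulCommutative_adjoin ℂ hcomm hcomm_star
    exact fun a ha b hb => setLike_mul_comm ha hb
  have hA'inv : ∀ t, ∀ a ∈ A', ω t a ∈ A' := fun t => by
    refine StarAlgebra.adjoin_le (S := A'.comap (ω t : B →⋆ₐ[ℂ] B)) ?_
    rintro a (rfl | ha)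
    · obtain ⟨γ, hγ⟩ := hωx t
      simpa [hγ] using SMulMemClass.smul_mem γ (StarAlgebra.subset_adjoin ℂ _ (mem_insert a _))
    · exact StarAlgebra.subset_adjoin ℂ _ (mem_insert_of_mem _ (hA.1.2 t a ha))
  have hle : A ≤ A' := fun a ha => StarAlgebra.subset_adjoin ℂ _ (mem_insert_of_mem _ ha)
  rw [← hA.eq_of_ge ⟨hA'comm, hA'inv⟩ hle]
  exact StarAlgebra.subset_adjoin ℂ _ (mem_insert x _)

theorem mem_of_mem_centralizer_of_isSemiInvariant (hA : Maximal (IsAbelianInvariant ω) A)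
    {x : B} (hxA : x ∈ centralizer (A : Set B)) (hωx : IsSemiInvariant ω x) : x ∈ A := by
  have hstar : star x ∈ centralizer (A : Set B) :=
    star_mem_centralizer' (fun _ ha => star_mem ha) hxA
  have hxx : x * star x ∈ A := mem_of_mem_centralizer_of_isStarNormal hA
    (mul_mem_centralizer hxA hstar) (IsSelfAdjoint.mul_star_self x).isStarNormal
    (hωx.mul hωx.star)
  have hxx' : star x * x ∈ A := mem_of_mem_centralizer_of_isStarNormal hA
    (mul_mem_centralizer hstar hxA) (IsSelfAdjoint.star_mul_self x).isStarNormal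
    (hωx.star.mul hωx)
  refine mem_of_mem_centralizer_of_isStarNormal hA hxA ?_ hωx
  exact IsStarNormal.of_commute_innerDerivation_star (hxA _ (sub_mem hxx hxx')).symm

end MaximalInvariantAbelian

/-- Theorem 2.7 of Beggs–Goldstein: if `A` is maximal among abelian
`𝕋`-invariant *-subalgebras of a C*-dynamical system `(B, 𝕋, ω)`, then `A` is
maximal abelian in `B`, i.e. `A' ∩ B = A`. -/
theorem maximal_abelian_of_maximal_invariant_abelian
    {B : Type*} [CStarAlgebra B]
    (ω : Circle → B ≃⋆ₐ[ℂ] B)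
    (hω : ∀ s t : Circle, ∀ b : B, ω (s * t) b = ω s (ω t b))
    (hωcont : ∀ b : B, Continuous fun t : Circle => ω t b)
    (A : StarSubalgebra ℂ B)
    (hab : ∀ a ∈ A, ∀ a' ∈ A, a * a' = a' * a)
    (hA : ∀ t : Circle, ∀ a ∈ A, ω t a ∈ A)
    (hmax : ∀ A' : StarSubalgebra ℂ B,
      (∀ a ∈ A', ∀ a' ∈ A', a * a' = a' * a) →
      (∀ t : Circle, ∀ a ∈ A', ω t a ∈ A') → A ≤ A' → A' = A) :
    {b : B | ∀ a ∈ A, a * b = b * a} = (A : Set B) := by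
  have hAmax : Maximal (IsAbelianInvariant ω) A :=
    maximal_iff.2 ⟨⟨hab, hA⟩, fun A' hA' hle => (hmax A' hA'.1 hA'.2 hle).symm⟩
  refine Subset.antisymm (fun b hb => ?_) fun a ha a' ha' => hab a' ha' a ha
  let g : C(UnitAddCircle, B) :=
    ⟨fun θ => ω θ.toCircle b, (hωcont b).comp AddCircle.continuous_toCircle⟩
  have hg : ∀ n, fourierCoeff g n ∈ A := fun n => by
    refine mem_of_mem_centralizer_of_isSemiInvariant hAmax (fourierCoeff_mem_centralizer g
      (fun θ => apply_mem_centralizer_of_map_mul hω hA hb _) n) fun t => ?_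
    obtain ⟨σ, rfl⟩ := AddCircle.toCircle_surjective one_ne_zero t
    exact ⟨_, map_fourierCoeff_of_map_add (fun θ => ω θ.toCircle)
      (fun σ θ v => by rw [AddCircle.toCircle_add, hω]) g.continuous σ n⟩
  have hbg : g 0 = b := by simp [g, apply_one_of_map_mul hω]
  exact hbg ▸ closure_minimal ((span_le (p := Subalgebra.toSubmodule A.toSubalgebra)).2
    (range_subset_iff.2 hg)) (isClosed_of_maximal_isAbelianInvariant hAmax)
    (mem_closure_span_fourierCoeff g 0)
end

section
/- Let B be a unital C*-algebra with isomorphism ψ : B → Mₙ ⊗ B, ψ(1) = Iₙ ⊗ 1, and define the shift σ₁ = ψ⁻¹ ∘ f where f(b) = Iₙ ⊗ b, and slice maps χ_{1ij} = (e_{ij} ⊗ id_B) ∘ ψ. If A ⊆ B is a maximal abelian *-subalgebra with σ₁(A) ⊆ A, then χ_{1ij}(A) ⊆ A for all 1 ≤ i,j ≤ n. -/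
/-- The `(i,j)` matrix-coefficient functional on `Mₙ(ℂ)`. -/
noncomputable def matrixCoeff (n : ℕ) (i j : Fin n) :
    Matrix (Fin n) (Fin n) ℂ →ₗ[ℂ] ℂ where
  toFun m := m i j
  map_add' _ _ := rfl
  map_smul' _ _ := rfl

/-- The slice map `e_{ij} ⊗ id_B : Mₙ ⊗ B → B`. -/
noncomputable def sliceMap (n : ℕ) (B : Type*) [Ring B] [Algebra ℂ B] (i j : Fin n) :
    TensorProduct ℂ (Matrix (Fin n) (Fin n) ℂ) B →ₗ[ℂ] B :=
  (TensorProduct.lid ℂ B).toLinearMap ∘ₗ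
    TensorProduct.map (matrixCoeff n i j) LinearMap.id

lemma sliceMap_one_tmul_mul (n : ℕ) (B : Type*) [Ring B] [Algebra ℂ B] (i j : Fin n)
    (b : B) (x : TensorProduct ℂ (Matrix (Fin n) (Fin n) ℂ) B) :
    sliceMap n B i j ((1 ⊗ₜ[ℂ] b) * x) = b * sliceMap n B i j x := by
  induction x using TensorProduct.induction_on with
  | zero => simp
  | tmul m c =>
      simp [sliceMap, Algebra.TensorProduct.tmul_mul_tmul, matrixCoeff, mul_smul_comm]
  | add x y hx hy => simp [mul_add, hx, hy]

lemma sliceMap_mul_one_tmul (n : ℕ) (B : Type*) [Ring B] [Algebra ℂ B] (i j : Fin n)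
    (b : B) (x : TensorProduct ℂ (Matrix (Fin n) (Fin n) ℂ) B) :
    sliceMap n B i j (x * (1 ⊗ₜ[ℂ] b)) = sliceMap n B i j x * b := by
  induction x using TensorProduct.induction_on with
  | zero => simp
  | tmul m c =>
      simp [sliceMap, Algebra.TensorProduct.tmul_mul_tmul, matrixCoeff, smul_mul_assoc]
  | add x y hx hy => simp [add_mul, hx, hy]

/-- If `A` is a maximal abelian *-subalgebra of `B` (with `ψ : B ≅ Mₙ ⊗ B`,
`ψ(1) = Iₙ ⊗ 1`) invariant under the shift `σ₁ = ψ⁻¹ ∘ (Iₙ ⊗ ·)`, then `A` is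
invariant under each slice map `χ_{1ij} = (e_{ij} ⊗ id) ∘ ψ`. -/
theorem slice_invariance_of_shift_invariant (n : ℕ) (B : Type*) [CStarAlgebra B]
    (ψ : B ≃ₐ[ℂ] TensorProduct ℂ (Matrix (Fin n) (Fin n) ℂ) B)
    (A : Subalgebra ℂ B)
    (hstar : ∀ a ∈ A, star a ∈ A)
    (hab : ∀ a ∈ A, ∀ a' ∈ A, a * a' = a' * a)
    (hmaxab : ∀ b : B, (∀ a ∈ A, a * b = b * a) → b ∈ A)
    (hshift : ∀ a ∈ A, ψ.symm (Algebra.TensorProduct.includeRight (R := ℂ)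
        (A := Matrix (Fin n) (Fin n) ℂ) a) ∈ A) :
    ∀ i j : Fin n, ∀ a ∈ A, sliceMap n B i j (ψ a) ∈ A := by
  intro i j a ha
  apply hmaxab
  intro a' ha'
  have hσ : ψ.symm ((1 : Matrix (Fin n) (Fin n) ℂ) ⊗ₜ[ℂ] a') ∈ A := hshift a' ha'
  have key : (1 : Matrix (Fin n) (Fin n) ℂ) ⊗ₜ[ℂ] a' = ψ (ψ.symm (1 ⊗ₜ[ℂ] a')) :=
    (ψ.apply_symm_apply _).symm
  calc a' * sliceMap n B i j (ψ a)
      = sliceMap n B i j ((1 ⊗ₜ[ℂ] a') * ψ a) := (sliceMap_one_tmul_mul n B i j a' (ψ a)).symm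
    _ = sliceMap n B i j (ψ (ψ.symm (1 ⊗ₜ[ℂ] a') * a)) := by rw [_root_.map_mul ψ, ψ.apply_symm_apply]
    _ = sliceMap n B i j (ψ (a * ψ.symm (1 ⊗ₜ[ℂ] a'))) := by
        rw [hab _ hσ _ ha]
    _ = sliceMap n B i j (ψ a * (1 ⊗ₜ[ℂ] a')) := by rw [_root_.map_mul ψ, ψ.apply_symm_apply]
    _ = sliceMap n B i j (ψ a) * a' := sliceMap_mul_one_tmul n B i j a' (ψ a)
end

section
/- Let B be a unital C*-algebra with isomorphism ψ : B → Mₙ ⊗ B, ψ(1) = Iₙ ⊗ 1, and A a maximal abelian *-subalgebra with σ₁(A) ⊆ A (σ₁ the shift ψ⁻¹(Iₙ ⊗ ·)). Then ψ(A) ⊆ Mₙ ⊗ A, and more generally the iterated isomorphism ψ_m : B → Mₙ^{⊗m} ⊗ B satisfies ψ_m(A) ⊆ Mₙ^{⊗m} ⊗ A. -/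
/-- A bundled complex algebra. -/
structure CAlgBundle where
  carrier : Type
  ring : Ring carrier
  alg : Algebra ℂ carrier

attribute [instance] CAlgBundle.ring CAlgBundle.alg

/-- The iterated tensor powers `Mₙ^{⊗m} ⊗ B`, nested as
`T 0 = B`, `T (m+1) = Mₙ ⊗ T m`. -/
noncomputable def tensorTower (n : ℕ) (B : Type) [Ring B] [Algebra ℂ B] : ℕ → CAlgBundle
  | 0 => ⟨B, inferInstance, inferInstance⟩
  | m + 1 => ⟨TensorProduct ℂ (Matrix (Fin n) (Fin n) ℂ) (tensorTower n B m).carrier,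
      inferInstance, inferInstance⟩

/-- `id^{⊗m} ⊗ ψ : T m ≃ T (m+1)`. -/
noncomputable def tensorStep (n : ℕ) (B : Type) [Ring B] [Algebra ℂ B]
    (ψ : B ≃ₐ[ℂ] TensorProduct ℂ (Matrix (Fin n) (Fin n) ℂ) B) :
    ∀ m : ℕ, (tensorTower n B m).carrier ≃ₐ[ℂ] (tensorTower n B (m + 1)).carrier
  | 0 => ψ
  | m + 1 => Algebra.TensorProduct.congr AlgEquiv.refl (tensorStep n B ψ m)

/-- The iterated isomorphism `ψ_m : B ≃ Mₙ^{⊗m} ⊗ B`, with `ψ₀ = id` and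
`ψ_{m+1} = (id^{⊗m} ⊗ ψ) ∘ ψ_m`. -/
noncomputable def psiIter (n : ℕ) (B : Type) [Ring B] [Algebra ℂ B]
    (ψ : B ≃ₐ[ℂ] TensorProduct ℂ (Matrix (Fin n) (Fin n) ℂ) B) :
    ∀ m : ℕ, B ≃ₐ[ℂ] (tensorTower n B m).carrier
  | 0 => AlgEquiv.refl
  | m + 1 => (psiIter n B ψ m).trans (tensorStep n B ψ m)

/-- The subalgebra `Mₙ^{⊗m} ⊗ A` of `T m`. -/
noncomputable def tensorSub (n : ℕ) (B : Type) [Ring B] [Algebra ℂ B]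
    (A : Subalgebra ℂ B) : ∀ m : ℕ, Subalgebra ℂ (tensorTower n B m).carrier
  | 0 => A
  | m + 1 => (Algebra.TensorProduct.map (AlgHom.id ℂ (Matrix (Fin n) (Fin n) ℂ))
      (tensorSub n B A m).val).range

/-!
Write `ψ a = ∑ᵢⱼ Eᵢⱼ ⊗ χᵢⱼ(a)` with slice maps `χᵢⱼ`. For `a, a' ∈ A` the element `σ₁ a'` lies in
`A`, hence commutes with `a`; applying `ψ`, `ψ a` commutes with `1 ⊗ a'`, so every slice
`χᵢⱼ(a)` commutes with every `a' ∈ A` and lies in `A` by maximality. Thus `ψ(A) ⊆ Mₙ ⊗ A`, and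
`id^{⊗m} ⊗ ψ` carries `Mₙ^{⊗m} ⊗ A` into `Mₙ^{⊗(m+1)} ⊗ A`, which gives the claim for `ψ_m`.
-/

open TensorProduct

namespace Matrix

variable {R ι B : Type*} [CommSemiring R] [Semiring B] [Algebra R B]

noncomputable def sliceMap (i j : ι) : Matrix ι ι R ⊗[R] B →ₗ[R] B :=
  TensorProduct.lid R B ∘ₗ (entryLinearMap R R i j).rTensor B

@[simp]
theorem sliceMap_tmul (i j : ι) (M : Matrix ι ι R) (b : B) :
    sliceMap i j (M ⊗ₜ[R] b) = M i j • b := rfl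

variable [Fintype ι] [DecidableEq ι]

theorem sliceMap_one_tmul_mul (i j : ι) (a : B) (x : Matrix ι ι R ⊗[R] B) :
    sliceMap i j ((1 : Matrix ι ι R) ⊗ₜ[R] a * x) = a * sliceMap i j x := by
  induction x using TensorProduct.induction_on with
  | zero => simp
  | tmul M b => simp [Algebra.TensorProduct.tmul_mul_tmul]
  | add x y hx hy => simp [mul_add, hx, hy]

theorem sliceMap_mul_one_tmul (i j : ι) (x : Matrix ι ι R ⊗[R] B) (a : B) :
    sliceMap i j (x * (1 : Matrix ι ι R) ⊗ₜ[R] a) = sliceMap i j x * a := by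
  induction x using TensorProduct.induction_on with
  | zero => simp
  | tmul M b => simp [Algebra.TensorProduct.tmul_mul_tmul]
  | add x y hx hy => simp [add_mul, hx, hy]

theorem _root_.Commute.sliceMap {x : Matrix ι ι R ⊗[R] B} {a : B}
    (h : Commute x ((1 : Matrix ι ι R) ⊗ₜ[R] a)) (i j : ι) :
    Commute (sliceMap i j x) a := by
  rw [Commute, SemiconjBy, ← sliceMap_mul_one_tmul, h.eq, sliceMap_one_tmul_mul]

theorem sum_single_tmul_sliceMap (x : Matrix ι ι R ⊗[R] B) :
    ∑ i, ∑ j, single i j (1 : R) ⊗ₜ[R] sliceMap i j x = x := by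
  induction x using TensorProduct.induction_on with
  | zero => simp
  | tmul M b =>
    conv_rhs => rw [matrix_eq_sum_single M]
    simp only [sum_tmul, sliceMap_tmul, tmul_smul, smul_tmul', smul_single, smul_eq_mul, mul_one]
  | add x y hx hy => simp [tmul_add, Finset.sum_add_distrib, hx, hy]

theorem mem_range_map_val_of_sliceMap_mem {A : Subalgebra R B}
    {x : Matrix ι ι R ⊗[R] B} (h : ∀ i j, sliceMap i j x ∈ A) :
    x ∈ (Algebra.TensorProduct.map (AlgHom.id R (Matrix ι ι R)) A.val).range := by
  rw [← sum_single_tmul_sliceMap x]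
  refine Subalgebra.sum_mem _ fun i _ => Subalgebra.sum_mem _ fun j _ => ?_
  exact ⟨single i j 1 ⊗ₜ ⟨_, h i j⟩, rfl⟩

end Matrix

theorem Algebra.TensorProduct.mapsTo_map_id_range_map_val {R M C D : Type*} [CommSemiring R]
    [Semiring M] [Algebra R M] [Semiring C] [Algebra R C] [Semiring D] [Algebra R D]
    (f : C →ₐ[R] D) {S : Subalgebra R C} {T : Subalgebra R D} (h : Set.MapsTo f S T) :
    Set.MapsTo (map (AlgHom.id R M) f) (map (AlgHom.id R M) S.val).range
      (map (AlgHom.id R M) T.val).range := by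
  rintro _ ⟨z, rfl⟩
  exact ⟨map (AlgHom.id R M) ((f.comp S.val).codRestrict T fun x => h x.2) z,
    congr($(map_id_comp T.val _) z).symm.trans congr($(map_id_comp f S.val) z)⟩

theorem AlgEquiv.mapsTo_range_map_val_of_commute_shift {R ι B : Type*} [CommSemiring R]
    [Fintype ι] [DecidableEq ι] [Semiring B] [Algebra R B]
    (ψ : B ≃ₐ[R] Matrix ι ι R ⊗[R] B) {A : Subalgebra R B}
    (hab : ∀ a ∈ A, ∀ a' ∈ A, a * a' = a' * a)
    (hmaxab : ∀ b : B, (∀ a ∈ A, a * b = b * a) → b ∈ A)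
    (hshift : ∀ a ∈ A, ψ.symm (Algebra.TensorProduct.includeRight a) ∈ A) :
    Set.MapsTo ψ A (Algebra.TensorProduct.map (AlgHom.id R (Matrix ι ι R)) A.val).range := by
  intro a ha
  refine Matrix.mem_range_map_val_of_sliceMap_mem fun i j => hmaxab _ fun a' ha' => ?_
  have hcomm : Commute (ψ a) (1 ⊗ₜ[R] a') := by
    have := Commute.map (hab a ha _ (hshift a' ha')) ψ
    rwa [AlgEquiv.apply_symm_apply] at this
  exact (hcomm.sliceMap i j).eq.symm

section Tower

variable {n : ℕ} {B : Type} [Ring B] [Algebra ℂ B]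
  {ψ : B ≃ₐ[ℂ] TensorProduct ℂ (Matrix (Fin n) (Fin n) ℂ) B} {A : Subalgebra ℂ B}

theorem tensorStep_mapsTo_tensorSub (hψ : Set.MapsTo ψ A
      (Algebra.TensorProduct.map (AlgHom.id ℂ (Matrix (Fin n) (Fin n) ℂ)) A.val).range) :
    ∀ m, Set.MapsTo (tensorStep n B ψ m) (tensorSub n B A m) (tensorSub n B A (m + 1))
  | 0 => hψ
  | m + 1 => Algebra.TensorProduct.mapsTo_map_id_range_map_val (tensorStep n B ψ m).toAlgHom
      (tensorStep_mapsTo_tensorSub hψ m)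

theorem psiIter_mapsTo_tensorSub (hψ : Set.MapsTo ψ A
      (Algebra.TensorProduct.map (AlgHom.id ℂ (Matrix (Fin n) (Fin n) ℂ)) A.val).range) :
    ∀ m, Set.MapsTo (psiIter n B ψ m) A (tensorSub n B A m)
  | 0 => Set.mapsTo_id _
  | m + 1 => (tensorStep_mapsTo_tensorSub hψ m).comp (psiIter_mapsTo_tensorSub hψ m)

end Tower

theorem psiIter_maps_into_tensor_sub_general (n : ℕ) (B : Type) [CStarAlgebra B]
    (ψ : B ≃ₐ[ℂ] TensorProduct ℂ (Matrix (Fin n) (Fin n) ℂ) B)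
    (A : Subalgebra ℂ B)
    (hab : ∀ a ∈ A, ∀ a' ∈ A, a * a' = a' * a)
    (hmaxab : ∀ b : B, (∀ a ∈ A, a * b = b * a) → b ∈ A)
    (hshift : ∀ a ∈ A, ψ.symm (Algebra.TensorProduct.includeRight (R := ℂ)
        (A := Matrix (Fin n) (Fin n) ℂ) a) ∈ A) :
    ∀ m : ℕ, ∀ a ∈ A, psiIter n B ψ m a ∈ tensorSub n B A m :=
  fun m => psiIter_mapsTo_tensorSub (ψ.mapsTo_range_map_val_of_commute_shift hab hmaxab hshift) m

/-- If `A` is a maximal abelian *-subalgebra of `B` invariant under the shift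
`σ₁ = ψ⁻¹ ∘ (Iₙ ⊗ ·)`, then `ψ(A) ⊆ Mₙ ⊗ A`, and more generally
`ψ_m(A) ⊆ Mₙ^{⊗m} ⊗ A` for every `m`. -/
theorem psiIter_maps_into_tensor_sub (n : ℕ) (B : Type) [CStarAlgebra B]
    (ψ : B ≃ₐ[ℂ] TensorProduct ℂ (Matrix (Fin n) (Fin n) ℂ) B)
    (A : Subalgebra ℂ B)
    (hstar : ∀ a ∈ A, star a ∈ A)
    (hab : ∀ a ∈ A, ∀ a' ∈ A, a * a' = a' * a)
    (hmaxab : ∀ b : B, (∀ a ∈ A, a * b = b * a) → b ∈ A)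
    (hshift : ∀ a ∈ A, ψ.symm (Algebra.TensorProduct.includeRight (R := ℂ)
        (A := Matrix (Fin n) (Fin n) ℂ) a) ∈ A) :
    ∀ m : ℕ, ∀ a ∈ A, psiIter n B ψ m a ∈ tensorSub n B A m :=
  psiIter_maps_into_tensor_sub_general n B ψ A hab hmaxab hshift
end

section
/- Let B, ψ be as above, A a maximal abelian *-subalgebra with σ₁(A) ⊆ A and σ₂(A) ⊆ A, φ : A → ℂ a unital algebra homomorphism extended to a positive contraction on B, and D = φ₁(A) ⊆ Mₙ. Then φ_m(A) ⊆ D^{⊗m} for all m ≥ 1. -/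
/-- The tensor powers `Mₙ^{⊗m}` (with a trailing `ℂ` factor), nested as
`T' 0 = ℂ`, `T' (m+1) = Mₙ ⊗ T' m`. -/
noncomputable def matTower (n : ℕ) : ℕ → CAlgBundle
  | 0 => ⟨ℂ, inferInstance, inferInstance⟩
  | m + 1 => ⟨TensorProduct ℂ (Matrix (Fin n) (Fin n) ℂ) (matTower n m).carrier,
      inferInstance, inferInstance⟩

/-- The embedding `Mₙ^{⊗m} → Mₙ^{⊗m} ⊗ B`, `x ↦ x ⊗ 1`. -/
noncomputable def matIncl (n : ℕ) (B : Type) [Ring B] [Algebra ℂ B] :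
    ∀ m : ℕ, (matTower n m).carrier →ₐ[ℂ] (tensorTower n B m).carrier
  | 0 => Algebra.ofId ℂ B
  | m + 1 => Algebra.TensorProduct.map (AlgHom.id ℂ (Matrix (Fin n) (Fin n) ℂ))
      (matIncl n B m)

/-- The map `id^{⊗m} ⊗ φ : Mₙ^{⊗m} ⊗ B → Mₙ^{⊗m}` induced by a functional
`φ : B → ℂ`. -/
noncomputable def phiSlice (n : ℕ) (B : Type) [Ring B] [Algebra ℂ B]
    (φ : B →ₗ[ℂ] ℂ) : ∀ m : ℕ, (tensorTower n B m).carrier →ₗ[ℂ] (matTower n m).carrier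
  | 0 => φ
  | m + 1 => TensorProduct.map LinearMap.id (phiSlice n B φ m)


/-- The map `id^{⊗m} ⊗ f : Mₙ^{⊗m} ⊗ B → Mₙ^{⊗m+1} ⊗ B` with `f(b) = Iₙ ⊗ b`. -/
noncomputable def shiftStep (n : ℕ) (B : Type) [Ring B] [Algebra ℂ B] :
    ∀ m : ℕ, (tensorTower n B m).carrier →ₐ[ℂ] (tensorTower n B (m + 1)).carrier
  | 0 => Algebra.TensorProduct.includeRight
  | m + 1 => Algebra.TensorProduct.map (AlgHom.id ℂ (Matrix (Fin n) (Fin n) ℂ))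
      (shiftStep n B m)

/-- The shift `σ_{m+1} = ψ_{m+1}⁻¹ ∘ (id^{⊗m} ⊗ f) ∘ ψ_m : B → B`. -/
noncomputable def shiftMap (n : ℕ) (B : Type) [Ring B] [Algebra ℂ B]
    (ψ : B ≃ₐ[ℂ] TensorProduct ℂ (Matrix (Fin n) (Fin n) ℂ) B) (m : ℕ) (b : B) : B :=
  (psiIter n B ψ (m + 1)).symm (shiftStep n B m (psiIter n B ψ m b))

/-- The subspaces `D^{⊗m}` of `Mₙ^{⊗m}` for a subspace `D ⊆ Mₙ`. -/
noncomputable def diagPow (n : ℕ) (D : Submodule ℂ (Matrix (Fin n) (Fin n) ℂ)) :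
    ∀ m : ℕ, Submodule ℂ (matTower n m).carrier
  | 0 => ⊤
  | m + 1 => LinearMap.range (TensorProduct.map D.subtype (diagPow n D m).subtype)


/-!
Write `Fₘ = (id ⊗ φ) ∘ ψₘ` (`phiIter`), so that `Fₘ₊₁ = (id ⊗ Fₘ) ∘ ψ`, and expand
`ψ a = ∑ eᵢⱼ ⊗ aᵢⱼ`. Since `ψ (σ₁ a') = 1 ⊗ a'`, the slices `aᵢⱼ` commute with `A`, hence lie in
the maximal abelian `A`, and `Fₘ₊₁ a = ∑ eᵢⱼ ⊗ Fₘ aᵢⱼ ∈ Mₙ ⊗ D^{⊗m}`. Likewise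
`(id ⊗ ψ) (ψ (σ₂ a')) = (id ⊗ f) (ψ a')`, so the middle slices of `(id ⊗ ψ) (ψ a)` are `ψ` of
elements of `A`; inductively this gives `Fₘ₊₁ a ∈ D ⊗ Mₙ^{⊗m}`. Over a field,
`(D ⊗ W) ∩ (V ⊗ E) = D ⊗ E` for subspaces `D ⊆ V`, `E ⊆ W`, which closes the induction.
-/

open TensorProduct

section RangeMapSubtype

variable {R M N : Type*} [CommRing R] [AddCommGroup M] [Module R M] [AddCommGroup N] [Module R N]

lemma map_mem_range_map_subtype {M' N' : Type*} [AddCommGroup M'] [Module R M']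
    [AddCommGroup N'] [Module R N'] {p : Submodule R M} {q : Submodule R N}
    {p' : Submodule R M'} {q' : Submodule R N'} {f : M →ₗ[R] M'} {g : N →ₗ[R] N'}
    (hf : ∀ x ∈ p, f x ∈ p') (hg : ∀ y ∈ q, g y ∈ q') {z : M ⊗[R] N}
    (hz : z ∈ LinearMap.range (map p.subtype q.subtype)) :
    map f g z ∈ LinearMap.range (map p'.subtype q'.subtype) := by
  obtain ⟨u, rfl⟩ := hz
  refine ⟨map (f.restrict hf) (g.restrict hg) u, ?_⟩
  simp only [← LinearMap.comp_apply, ← map_comp, LinearMap.subtype_comp_restrict]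
  rfl

lemma mem_range_map_subtype_top_of_rid_mem {p : Submodule R M} {x : M ⊗[R] R}
    (hx : TensorProduct.rid R M x ∈ p) :
    x ∈ LinearMap.range (map p.subtype (⊤ : Submodule R R).subtype) :=
  ⟨⟨_, hx⟩ ⊗ₜ ⟨1, Submodule.mem_top⟩,
    (map_tmul _ _ _ _).trans ((TensorProduct.rid R M).symm_apply_apply x)⟩

end RangeMapSubtype

lemma mem_range_map_subtype_of_mem_of_mem {K V W : Type*} [Field K] [AddCommGroup V] [Module K V]
    [AddCommGroup W] [Module K W] {p : Submodule K V} {q : Submodule K W} {z : V ⊗[K] W}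
    (hp : z ∈ LinearMap.range (map p.subtype (⊤ : Submodule K W).subtype))
    (hq : z ∈ LinearMap.range (map (⊤ : Submodule K V).subtype q.subtype)) :
    z ∈ LinearMap.range (map p.subtype q.subtype) := by
  -- a projection `π` onto `p` fixes `p ⊗ W` and maps `V ⊗ q` into `p ⊗ q`
  obtain ⟨p', hp'⟩ := p.exists_isCompl
  set π := p.subtype ∘ₗ p.projectionOnto p' hp'
  have hπ : π ∘ₗ p.subtype = p.subtype := by
    ext x; simp [π, Submodule.projectionOnto_apply_left]
  have hfix : map π LinearMap.id z = z := by
    obtain ⟨u, rfl⟩ := hp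
    rw [← LinearMap.comp_apply, ← map_comp, hπ, LinearMap.id_comp]
  rw [← hfix]
  exact map_mem_range_map_subtype (fun x _ => by simp [π]) (fun y hy => hy) hq

section EntrySlice

variable {R ι M N : Type*} [CommRing R]
  [AddCommGroup M] [Module R M] [AddCommGroup N] [Module R N]

noncomputable def entrySlice (i j : ι) : Matrix ι ι R ⊗[R] N →ₗ[R] N :=
  TensorProduct.lid R N ∘ₗ (Matrix.entryLinearMap R R i j).rTensor N

@[simp]
lemma entrySlice_tmul (i j : ι) (x : Matrix ι ι R) (v : N) :
    entrySlice i j (x ⊗ₜ[R] v) = x i j • v := by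
  simp [entrySlice]

lemma entrySlice_comp_lTensor {N' : Type*} [AddCommGroup N'] [Module R N'] (f : N →ₗ[R] N')
    (i j : ι) : entrySlice i j ∘ₗ f.lTensor (Matrix ι ι R) = f ∘ₗ entrySlice i j :=
  TensorProduct.ext' fun x v => by simp

lemma sum_mk_single_comp_entrySlice [Fintype ι] [DecidableEq ι] :
    ∑ i : ι, ∑ j : ι, TensorProduct.mk R (Matrix ι ι R) N (Matrix.single i j 1) ∘ₗ
      entrySlice i j = LinearMap.id := by
  refine TensorProduct.ext' fun x v => ?_
  simp only [LinearMap.coe_sum, Finset.sum_apply, LinearMap.comp_apply, entrySlice_tmul,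
    TensorProduct.mk_apply, LinearMap.id_apply, tmul_smul, smul_tmul', Matrix.smul_single,
    smul_eq_mul, mul_one, ← sum_tmul, ← Matrix.matrix_eq_sum_single]

lemma mem_range_map_subtype_of_entrySlice_mem [Fintype ι] [DecidableEq ι] {q : Submodule R N}
    {z : Matrix ι ι R ⊗[R] N} (h : ∀ i j, entrySlice i j z ∈ q) :
    z ∈ LinearMap.range (map (⊤ : Submodule R (Matrix ι ι R)).subtype q.subtype) := by
  rw [← LinearMap.id_apply (R := R) z, ← sum_mk_single_comp_entrySlice]
  simp only [LinearMap.coe_sum, Finset.sum_apply, LinearMap.comp_apply, mk_apply]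
  refine Submodule.sum_mem _ fun i _ => Submodule.sum_mem _ fun j _ => ?_
  exact ⟨⟨_, Submodule.mem_top⟩ ⊗ₜ ⟨_, h i j⟩, map_tmul _ _ _ _⟩

lemma mem_range_map_subtype_top_of_lTensor_entrySlice_mem [Fintype ι] [DecidableEq ι]
    {p : Submodule R M} {z : M ⊗[R] (Matrix ι ι R ⊗[R] N)}
    (h : ∀ i j, (entrySlice i j).lTensor M z ∈
      LinearMap.range (map p.subtype (⊤ : Submodule R N).subtype)) :
    z ∈ LinearMap.range (map p.subtype (⊤ : Submodule R (Matrix ι ι R ⊗[R] N)).subtype) := by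
  have hz : (∑ i : ι, ∑ j : ι, TensorProduct.mk R (Matrix ι ι R) N (Matrix.single i j 1) ∘ₗ
      entrySlice i j).lTensor M z = z := by
    rw [sum_mk_single_comp_entrySlice, LinearMap.lTensor_id, LinearMap.id_apply]
  simp only [← LinearMap.coe_lTensorHom, map_sum, LinearMap.coe_sum, Finset.sum_apply] at hz
  rw [← hz]
  refine Submodule.sum_mem _ fun i _ => Submodule.sum_mem _ fun j _ => ?_
  rw [LinearMap.coe_lTensorHom, LinearMap.lTensor_comp, LinearMap.comp_apply]
  exact map_mem_range_map_subtype (fun x hx => hx) (fun _ _ => Submodule.mem_top) (h i j)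

end EntrySlice

section Commute

variable {R ι A C : Type*} [CommRing R] [Fintype ι] [DecidableEq ι]
  [Ring A] [Algebra R A] [Ring C] [Algebra R C]

lemma entrySlice_mul_one_tmul (i j : ι) (z : Matrix ι ι R ⊗[R] C) (c : C) :
    entrySlice i j (z * (1 ⊗ₜ c)) = entrySlice i j z * c := by
  induction z using TensorProduct.induction_on with
  | zero => simp
  | tmul x d => simp [Algebra.TensorProduct.tmul_mul_tmul]
  | add z w hz hw => simp only [add_mul, map_add, hz, hw]

lemma entrySlice_one_tmul_mul (i j : ι) (z : Matrix ι ι R ⊗[R] C) (c : C) :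
    entrySlice i j ((1 ⊗ₜ c) * z) = c * entrySlice i j z := by
  induction z using TensorProduct.induction_on with
  | zero => simp
  | tmul x d => simp [Algebra.TensorProduct.tmul_mul_tmul]
  | add z w hz hw => simp only [mul_add, map_add, hz, hw]

lemma commute_entrySlice {z : Matrix ι ι R ⊗[R] C} {c : C} (h : Commute z (1 ⊗ₜ c)) (i j : ι) :
    Commute (entrySlice i j z) c := by
  rw [commute_iff_eq, ← entrySlice_mul_one_tmul, ← entrySlice_one_tmul_mul, h.eq]

lemma entrySlice_leftComm (i j : ι) (z : A ⊗[R] (Matrix ι ι R ⊗[R] C)) :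
    entrySlice i j (Algebra.TensorProduct.leftComm R A (Matrix ι ι R) C z) =
      (entrySlice i j).lTensor A z := by
  induction z using TensorProduct.induction_on with
  | zero => simp
  | tmul a w =>
    induction w using TensorProduct.induction_on with
    | zero => simp
    | tmul x c => simp
    | add v w hv hw => simp only [tmul_add, map_add, hv, hw]
  | add v w hv hw => simp only [map_add, hv, hw]

lemma leftComm_map_includeRight (w : A ⊗[R] C) :
    Algebra.TensorProduct.leftComm R A (Matrix ι ι R) C
      (Algebra.TensorProduct.map (AlgHom.id R A) Algebra.TensorProduct.includeRight w) =
      1 ⊗ₜ w := by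
  induction w using TensorProduct.induction_on with
  | zero => simp
  | tmul a c => simp
  | add v w hv hw => simp only [map_add, hv, hw, tmul_add]

lemma commute_lTensor_entrySlice {z : A ⊗[R] (Matrix ι ι R ⊗[R] C)} {w : A ⊗[R] C}
    (h : Commute z
      (Algebra.TensorProduct.map (AlgHom.id R A) Algebra.TensorProduct.includeRight w))
    (i j : ι) : Commute ((entrySlice i j).lTensor A z) w := by
  have h' := h.map (Algebra.TensorProduct.leftComm R A (Matrix ι ι R) C)
  rw [leftComm_map_includeRight] at h'
  rw [← entrySlice_leftComm]
  exact commute_entrySlice h' i j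

end Commute

section Tower

variable (n : ℕ) (B : Type) [Ring B] [Algebra ℂ B]
  (ψ : B ≃ₐ[ℂ] Matrix (Fin n) (Fin n) ℂ ⊗[ℂ] B)

noncomputable def phiIter (φ : B →ₗ[ℂ] ℂ) (m : ℕ) : B →ₗ[ℂ] (matTower n m).carrier :=
  phiSlice n B φ m ∘ₗ (psiIter n B ψ m).toLinearMap

variable {n B ψ}

lemma psiIter_one_apply (b : B) : psiIter n B ψ 1 b = ψ b := rfl

lemma psiIter_succ_apply (m : ℕ) (b : B) :
    psiIter n B ψ (m + 1) b =
      (psiIter n B ψ m).toLinearMap.lTensor (Matrix (Fin n) (Fin n) ℂ) (ψ b) := by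
  induction m with
  | zero =>
    show ψ b = LinearMap.lTensor _ LinearMap.id (ψ b)
    rw [LinearMap.lTensor_id, LinearMap.id_apply]
  | succ m ih =>
    show (tensorStep n B ψ m).toLinearMap.lTensor _ (psiIter n B ψ (m + 1) b) = _
    rw [ih, ← LinearMap.lTensor_comp_apply]
    rfl

lemma phiIter_succ_apply (φ : B →ₗ[ℂ] ℂ) (m : ℕ) (b : B) :
    phiIter n B ψ φ (m + 1) b = (phiIter n B ψ φ m).lTensor (Matrix (Fin n) (Fin n) ℂ) (ψ b) := by
  show phiSlice n B φ (m + 1) (psiIter n B ψ (m + 1) b) = _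
  rw [psiIter_succ_apply]
  show (phiSlice n B φ m).lTensor _ _ = _
  rw [← LinearMap.lTensor_comp_apply]
  rfl

lemma phiIter_add_two_apply (φ : B →ₗ[ℂ] ℂ) (m : ℕ) (b : B) :
    phiIter n B ψ φ (m + 2) b =
      ((phiIter n B ψ φ m).lTensor (Matrix (Fin n) (Fin n) ℂ)).lTensor
        (Matrix (Fin n) (Fin n) ℂ) (ψ.toLinearMap.lTensor (Matrix (Fin n) (Fin n) ℂ) (ψ b)) := by
  rw [← LinearMap.lTensor_comp_apply, phiIter_succ_apply]
  congr 2
  exact LinearMap.ext (phiIter_succ_apply φ m)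

lemma psi_shiftMap_zero (a : B) : ψ (shiftMap n B ψ 0 a) = 1 ⊗ₜ a := by
  rw [← psiIter_one_apply, shiftMap, AlgEquiv.apply_symm_apply]
  rfl

lemma lTensor_psi_psi_shiftMap_one (a : B) :
    ψ.toLinearMap.lTensor (Matrix (Fin n) (Fin n) ℂ) (ψ (shiftMap n B ψ 1 a)) =
      Algebra.TensorProduct.map (AlgHom.id ℂ (Matrix (Fin n) (Fin n) ℂ))
        Algebra.TensorProduct.includeRight (ψ a) := by
  show psiIter n B ψ 2 (shiftMap n B ψ 1 a) = _
  rw [shiftMap, AlgEquiv.apply_symm_apply]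
  rfl

variable {A : Subalgebra ℂ B}

lemma entrySlice_psi_mem (hA : Subalgebra.centralizer ℂ (A : Set B) = A)
    (hshift1 : ∀ a ∈ A, shiftMap n B ψ 0 a ∈ A) {a : B} (ha : a ∈ A) (i j : Fin n) :
    entrySlice i j (ψ a) ∈ A := by
  refine hA.le ((Subalgebra.mem_centralizer_iff ℂ).2 fun a' ha' => ?_)
  have hcomm : Commute a (shiftMap n B ψ 0 a') :=
    (Subalgebra.mem_centralizer_iff ℂ).1 (hA.ge (hshift1 a' ha')) a ha
  have h : Commute (ψ a) (1 ⊗ₜ a') := psi_shiftMap_zero (ψ := ψ) a' ▸ hcomm.map ψ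
  exact (commute_entrySlice h i j).eq.symm

lemma psi_symm_lTensor_entrySlice_mem (hA : Subalgebra.centralizer ℂ (A : Set B) = A)
    (hshift2 : ∀ a ∈ A, shiftMap n B ψ 1 a ∈ A) {a : B} (ha : a ∈ A) (i j : Fin n) :
    ψ.symm ((entrySlice i j).lTensor (Matrix (Fin n) (Fin n) ℂ)
      (ψ.toLinearMap.lTensor (Matrix (Fin n) (Fin n) ℂ) (ψ a))) ∈ A := by
  refine hA.le ((Subalgebra.mem_centralizer_iff ℂ).2 fun a' ha' => ?_)
  have hcomm : Commute a (shiftMap n B ψ 1 a') :=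
    (Subalgebra.mem_centralizer_iff ℂ).1 (hA.ge (hshift2 a' ha')) a ha
  have h : Commute (ψ.toLinearMap.lTensor (Matrix (Fin n) (Fin n) ℂ) (ψ a))
      (Algebra.TensorProduct.map (AlgHom.id ℂ (Matrix (Fin n) (Fin n) ℂ))
        Algebra.TensorProduct.includeRight (ψ a')) := by
    rw [← lTensor_psi_psi_shiftMap_one]
    exact hcomm.map ((Algebra.TensorProduct.map (AlgHom.id ℂ _) ψ.toAlgHom).comp ψ.toAlgHom)
  have h' := (commute_lTensor_entrySlice h i j).map ψ.symm
  rw [ψ.symm_apply_apply] at h'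
  exact h'.eq.symm

lemma phiIter_succ_mem_range_map_top_subtype (hA : Subalgebra.centralizer ℂ (A : Set B) = A)
    (hshift1 : ∀ a ∈ A, shiftMap n B ψ 0 a ∈ A) (φ : B →ₗ[ℂ] ℂ) {m : ℕ}
    {q : Submodule ℂ (matTower n m).carrier} (hq : ∀ a ∈ A, phiIter n B ψ φ m a ∈ q)
    {a : B} (ha : a ∈ A) :
    phiIter n B ψ φ (m + 1) a ∈ LinearMap.range
      (map (⊤ : Submodule ℂ (Matrix (Fin n) (Fin n) ℂ)).subtype q.subtype) := by
  rw [phiIter_succ_apply]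
  exact map_mem_range_map_subtype (fun x hx => hx) hq
    (mem_range_map_subtype_of_entrySlice_mem (q := Subalgebra.toSubmodule A)
      (entrySlice_psi_mem hA hshift1 ha))

lemma phiIter_succ_mem_range_map_subtype_top (hA : Subalgebra.centralizer ℂ (A : Set B) = A)
    (hshift2 : ∀ a ∈ A, shiftMap n B ψ 1 a ∈ A) (φ : B →ₗ[ℂ] ℂ)
    {D : Submodule ℂ (Matrix (Fin n) (Fin n) ℂ)}
    (hD : ∀ a ∈ A, phiIter n B ψ φ 1 a ∈
      LinearMap.range (map D.subtype (⊤ : Submodule ℂ ℂ).subtype)) (m : ℕ) :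
    ∀ a ∈ A, phiIter n B ψ φ (m + 1) a ∈ LinearMap.range
      (map D.subtype (⊤ : Submodule ℂ (matTower n m).carrier).subtype) := by
  induction m with
  | zero => exact hD
  | succ m ih =>
    intro a ha
    rw [phiIter_add_two_apply]
    refine mem_range_map_subtype_top_of_lTensor_entrySlice_mem fun i j => ?_
    rw [← LinearMap.lTensor_comp_apply, entrySlice_comp_lTensor, LinearMap.lTensor_comp_apply,
      ← ψ.apply_symm_apply ((entrySlice i j).lTensor _ _), ← phiIter_succ_apply]
    exact ih _ (psi_symm_lTensor_entrySlice_mem hA hshift2 ha i j)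

end Tower

open scoped ComplexOrder in
theorem phiSlice_maps_into_diagPow_general (n : ℕ) (B : Type) [CStarAlgebra B]
    (ψ : B ≃ₐ[ℂ] TensorProduct ℂ (Matrix (Fin n) (Fin n) ℂ) B)
    (A : Subalgebra ℂ B)
    (hab : ∀ a ∈ A, ∀ a' ∈ A, a * a' = a' * a)
    (hmaxab : ∀ b : B, (∀ a ∈ A, a * b = b * a) → b ∈ A)
    (hshift1 : ∀ a ∈ A, shiftMap n B ψ 0 a ∈ A)
    (hshift2 : ∀ a ∈ A, shiftMap n B ψ 1 a ∈ A)
    (φ : B →ₗ[ℂ] ℂ)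
    (D : Submodule ℂ (Matrix (Fin n) (Fin n) ℂ))
    (hD : D = Submodule.map
      ((TensorProduct.rid ℂ (Matrix (Fin n) (Fin n) ℂ)).toLinearMap ∘ₗ
        ((phiSlice n B φ 1) ∘ₗ (psiIter n B ψ 1).toLinearMap))
      (Subalgebra.toSubmodule A)) :
    ∀ m : ℕ, 1 ≤ m → ∀ a ∈ A,
      phiSlice n B φ m (psiIter n B ψ m a) ∈ diagPow n D m := by
  have hA : Subalgebra.centralizer ℂ (A : Set B) = A := SetLike.ext fun b =>
    ⟨hmaxab b ∘ (Subalgebra.mem_centralizer_iff ℂ).1,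
      fun hb => (Subalgebra.mem_centralizer_iff ℂ).2 fun a ha => hab a ha b hb⟩
  have hD₁ : ∀ a ∈ A, phiIter n B ψ φ 1 a ∈
      LinearMap.range (map D.subtype (⊤ : Submodule ℂ ℂ).subtype) := fun a ha =>
    mem_range_map_subtype_top_of_rid_mem (hD ▸ ⟨a, ha, rfl⟩)
  have hdiag : ∀ m, ∀ a ∈ A, phiIter n B ψ φ m a ∈ diagPow n D m := by
    intro m
    induction m with
    | zero => exact fun _ _ => Submodule.mem_top
    | succ m ih =>
      exact fun a ha => mem_range_map_subtype_of_mem_of_mem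
        (phiIter_succ_mem_range_map_subtype_top hA hshift2 φ hD₁ m a ha)
        (phiIter_succ_mem_range_map_top_subtype hA hshift1 φ ih ha)
  exact fun m _ a ha => hdiag m a ha

open scoped ComplexOrder in
/-- Corollary 3.8: if the maximal abelian *-subalgebra `A` is invariant under
both shifts `σ₁` and `σ₂`, and `φ : B → ℂ` is a positive unital contraction
restricting to an algebra homomorphism on `A`, with `D = φ₁(A) ⊆ Mₙ`, then
`φ_m(A) ⊆ D^{⊗m}` for every `m ≥ 1`. -/
theorem phiSlice_maps_into_diagPow (n : ℕ) (B : Type) [CStarAlgebra B]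
    (ψ : B ≃ₐ[ℂ] TensorProduct ℂ (Matrix (Fin n) (Fin n) ℂ) B)
    (A : Subalgebra ℂ B)
    (hstar : ∀ a ∈ A, star a ∈ A)
    (hab : ∀ a ∈ A, ∀ a' ∈ A, a * a' = a' * a)
    (hmaxab : ∀ b : B, (∀ a ∈ A, a * b = b * a) → b ∈ A)
    (hshift1 : ∀ a ∈ A, shiftMap n B ψ 0 a ∈ A)
    (hshift2 : ∀ a ∈ A, shiftMap n B ψ 1 a ∈ A)
    (φ : B →ₗ[ℂ] ℂ)
    (hφ1 : φ 1 = 1)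
    (hφc : ∀ b : B, ‖φ b‖ ≤ ‖b‖)
    (hφpos : ∀ b : B, 0 ≤ φ (star b * b))
    (hφmul : ∀ a ∈ A, ∀ a' ∈ A, φ (a * a') = φ a * φ a')
    (D : Submodule ℂ (Matrix (Fin n) (Fin n) ℂ))
    (hD : D = Submodule.map
      ((TensorProduct.rid ℂ (Matrix (Fin n) (Fin n) ℂ)).toLinearMap ∘ₗ
        ((phiSlice n B φ 1) ∘ₗ (psiIter n B ψ 1).toLinearMap))
      (Subalgebra.toSubmodule A)) :
    ∀ m : ℕ, 1 ≤ m → ∀ a ∈ A,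
      phiSlice n B φ m (psiIter n B ψ m a) ∈ diagPow n D m :=
  phiSlice_maps_into_diagPow_general n B ψ A hab hmaxab hshift1 hshift2 φ D hD
end
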